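/- arXiv:1507.06644 — 3 statements merged into one kernel-verified Lean document; each statement's English description precedes it below -/
import Mathlib

section
/- Let M be a model category, let f : X₀ → X₁ and g : Y₀ → Y₁ be morphisms of M, and let τ : f → g be a morphism in Arrow M with components τ₀ : X₀ → Y₀ and τ₁ : X₁ → Y₁. Then there exist a morphism h : Z₀ → Z₁ of M and morphisms σ : f → h and ρ : h → g in Arrow M with ρ ∘ σ = τ such that: σ₀ : X₀ → Z₀ is a cofibration in M; the corner map Z₀ ⊔_{X₀} X₁ → Z₁ of σ is a trivial cofibration in M; ρ₀ : Z₀ → Y₀ is a trivial fibration in M; and ρ₁ : Z₁ → Y₁ is a fibration in M. -/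
open CategoryTheory CategoryTheory.Limits

universe v u

/-- `f` is a retract of `g` in the arrow category. -/
def IsRetract {C : Type u} [Category.{v} C] {X Y X' Y' : C} (f : X ⟶ Y) (g : X' ⟶ Y') : Prop :=
  ∃ (i : X ⟶ X') (r : X' ⟶ X) (i' : Y ⟶ Y') (r' : Y' ⟶ Y),
    i ≫ r = 𝟙 X ∧ i' ≫ r' = 𝟙 Y ∧ i ≫ g = f ≫ i' ∧ g ≫ r' = r ≫ f

/-- A model structure on a category: three classes of morphisms (weak equivalences,
cofibrations, fibrations) satisfying Quillen's axioms (two-out-of-three, closure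
under retracts, lifting, and factorization). -/
structure ModelStructure (C : Type u) [Category.{v} C] where
  W : MorphismProperty C
  Cof : MorphismProperty C
  Fib : MorphismProperty C
  w_comp : ∀ {X Y Z : C} (f : X ⟶ Y) (g : Y ⟶ Z), W f → W g → W (f ≫ g)
  w_cancel_left : ∀ {X Y Z : C} (f : X ⟶ Y) (g : Y ⟶ Z), W f → W (f ≫ g) → W g
  w_cancel_right : ∀ {X Y Z : C} (f : X ⟶ Y) (g : Y ⟶ Z), W g → W (f ≫ g) → W f
  w_retract : ∀ {X Y X' Y' : C} (f : X ⟶ Y) (g : X' ⟶ Y'), IsRetract f g → W g → W f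
  cof_retract : ∀ {X Y X' Y' : C} (f : X ⟶ Y) (g : X' ⟶ Y'), IsRetract f g → Cof g → Cof f
  fib_retract : ∀ {X Y X' Y' : C} (f : X ⟶ Y) (g : X' ⟶ Y'), IsRetract f g → Fib g → Fib f
  lift_cof_trivFib : ∀ {A B X Y : C} (i : A ⟶ B) (p : X ⟶ Y),
    Cof i → Fib p → W p → HasLiftingProperty i p
  lift_trivCof_fib : ∀ {A B X Y : C} (i : A ⟶ B) (p : X ⟶ Y),
    Cof i → W i → Fib p → HasLiftingProperty i p
  factor_cof_trivFib : ∀ {X Y : C} (f : X ⟶ Y), ∃ (Z : C) (g : X ⟶ Z) (h : Z ⟶ Y),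
    Cof g ∧ Fib h ∧ W h ∧ g ≫ h = f
  factor_trivCof_fib : ∀ {X Y : C} (f : X ⟶ Y), ∃ (Z : C) (g : X ⟶ Z) (h : Z ⟶ Y),
    Cof g ∧ W g ∧ Fib h ∧ g ≫ h = f

variable {M : Type u} [Category.{v} M]

/-- An object is cofibrant if the map from the initial object is a cofibration. -/
def ModelStructure.Cofibrant [HasInitial M] (m : ModelStructure M) (X : M) : Prop :=
  m.Cof (initial.to X)

section Latching

variable {P : Type} [Preorder P] [HasColimitsOfSize.{0, 0} M]

/-- The latching object of `F : P ⥤ M` at `x`: the colimit of `F` over the full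
subcategory of all `y < x`. -/
noncomputable def latchingObj (F : P ⥤ M) (x : P) : M :=
  colimit (ObjectProperty.ι (fun y : P => y < x) ⋙ F)

/-- The canonical (latching) map `L_x F ⟶ F x`. -/
noncomputable def latchingMap (F : P ⥤ M) (x : P) : latchingObj F x ⟶ F.obj x :=
  colimit.desc (ObjectProperty.ι (fun y : P => y < x) ⋙ F)
    { pt := F.obj x
      ι :=
        { app := fun y => F.map (homOfLE y.property.le)
          naturality := by
            intro a b f
            dsimp
            rw [Category.comp_id, ← F.map_comp]
            rfl } }

/-- The map induced by a natural transformation on latching objects. -/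
noncomputable def latchingObjHom {F G : P ⥤ M} (τ : F ⟶ G) (x : P) :
    latchingObj F x ⟶ latchingObj G x :=
  colimMap (Functor.whiskerLeft (ObjectProperty.ι (fun y : P => y < x)) τ)

lemma latching_square {F G : P ⥤ M} (τ : F ⟶ G) (x : P) :
    latchingMap F x ≫ τ.app x = latchingObjHom τ x ≫ latchingMap G x := by
  apply colimit.hom_ext
  intro y
  simp only [latchingMap, latchingObjHom]
  erw [colimit.ι_desc_assoc, ι_colimMap_assoc, colimit.ι_desc]
  simp

/-- The relative latching map of `τ : F ⟶ G` at `x`: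
the induced map `(L_x G) ⊔_{L_x F} F x ⟶ G x`. -/
noncomputable def relLatchingMap {F G : P ⥤ M} (τ : F ⟶ G) (x : P) :
    pushout (latchingMap F x) (latchingObjHom τ x) ⟶ G.obj x :=
  pushout.desc (τ.app x) (latchingMap G x) (latching_square τ x)

end Latching

/-- The corner map (pushout-corner map) of a commutative square `τ : f ⟶ g`
in the arrow category: the canonical morphism `Y₀ ⊔_{X₀} X₁ ⟶ Y₁`. -/
noncomputable def cornerMap [HasPushouts M] {f g : Arrow M} (τ : f ⟶ g) :
    pushout τ.left f.hom ⟶ g.right :=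
  pushout.desc g.hom τ.right (Arrow.w τ)

/-!
Factor `τ.left` as a cofibration `σ₀ : X₀ ⟶ Z₀` followed by a trivial fibration `ρ₀`, then
factor the induced map `Z₀ ⊔_{X₀} X₁ ⟶ Y₁` as a trivial cofibration `j` followed by a
fibration `ρ₁`. The square with left component `σ₀` and corner map `j` is `σ`, and `(ρ₀, ρ₁)`
is `ρ`.
-/

section PushoutCorner

variable [HasPushouts M] {f : Arrow M} {Z₀ Z₁ : M} (σ₀ : f.left ⟶ Z₀) (j : pushout σ₀ f.hom ⟶ Z₁)

/-- The arrow `Z₀ ⟶ Z₀ ⊔_{X₀} X₁ ⟶ Z₁`; a square out of `f` is determined by its left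
component `σ₀` and its corner map `j`, and this is its codomain. -/
noncomputable def pushoutCornerArrow : Arrow M :=
  Arrow.mk (pushout.inl σ₀ f.hom ≫ j)

noncomputable def toPushoutCornerArrow : f ⟶ pushoutCornerArrow σ₀ j :=
  Arrow.homMk σ₀ (pushout.inr σ₀ f.hom ≫ j) (by
    simp only [pushoutCornerArrow, Arrow.mk_hom, ← Category.assoc, pushout.condition])

lemma cornerMap_toPushoutCornerArrow : cornerMap (toPushoutCornerArrow σ₀ j) = j :=
  pushout.hom_ext (pushout.inl_desc _ _ _) (pushout.inr_desc _ _ _)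

lemma exists_toPushoutCornerArrow_comp_eq {g : Arrow M} (τ : f ⟶ g) (ρ₀ : Z₀ ⟶ g.left)
    (h₀ : σ₀ ≫ ρ₀ = τ.left) (ρ₁ : Z₁ ⟶ g.right)
    (h₁ : j ≫ ρ₁ = pushout.desc (ρ₀ ≫ g.hom) τ.right (by rw [← Category.assoc, h₀, Arrow.w])) :
    ∃ ρ : pushoutCornerArrow σ₀ j ⟶ g,
      toPushoutCornerArrow σ₀ j ≫ ρ = τ ∧ ρ.left = ρ₀ ∧ ρ.right = ρ₁ := by
  refine ⟨Arrow.homMk ρ₀ ρ₁ ?_, ?_, rfl, rfl⟩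
  · simp only [pushoutCornerArrow, Arrow.mk_hom, Category.assoc, h₁, pushout.inl_desc]
  · ext
    · exact h₀
    · change (pushout.inr σ₀ f.hom ≫ j) ≫ ρ₁ = τ.right
      rw [Category.assoc, h₁, pushout.inr_desc]

end PushoutCorner

theorem statement2_general [HasColimits M] (m : ModelStructure M)
    {f g : Arrow M} (τ : f ⟶ g) :
    ∃ (h : Arrow M) (σ : f ⟶ h) (ρ : h ⟶ g),
      σ ≫ ρ = τ ∧
      m.Cof σ.left ∧
      (m.Cof (cornerMap σ) ∧ m.W (cornerMap σ)) ∧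
      (m.Fib ρ.left ∧ m.W ρ.left) ∧
      m.Fib ρ.right := by
  obtain ⟨Z₀, σ₀, ρ₀, hσ₀, hρ₀, hρ₀w, h₀⟩ := m.factor_cof_trivFib τ.left
  obtain ⟨Z₁, j, ρ₁, hj, hjw, hρ₁, h₁⟩ := m.factor_trivCof_fib
    (pushout.desc (ρ₀ ≫ g.hom) τ.right (by rw [← Category.assoc, h₀, Arrow.w]))
  obtain ⟨ρ, hτ, rfl, rfl⟩ := exists_toPushoutCornerArrow_comp_eq σ₀ j τ ρ₀ h₀ ρ₁ h₁
  refine ⟨_, toPushoutCornerArrow σ₀ j, ρ, hτ, hσ₀, ?_, ⟨hρ₀, hρ₀w⟩, hρ₁⟩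
  rw [cornerMap_toPushoutCornerArrow]
  exact ⟨hj, hjw⟩

/-- Any morphism `τ : f ⟶ g` of `Arrow M` factors as `σ ≫ ρ` where
`σ.left` is a cofibration, the corner map of `σ` is a trivial cofibration, `ρ.left`
is a trivial fibration and `ρ.right` is a fibration. -/
theorem statement2 [HasLimits M] [HasColimits M] (m : ModelStructure M)
    {f g : Arrow M} (τ : f ⟶ g) :
    ∃ (h : Arrow M) (σ : f ⟶ h) (ρ : h ⟶ g),
      σ ≫ ρ = τ ∧
      m.Cof σ.left ∧
      (m.Cof (cornerMap σ) ∧ m.W (cornerMap σ)) ∧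
      (m.Fib ρ.left ∧ m.W ρ.left) ∧
      m.Fib ρ.right :=
  statement2_general m τ
end

section
/- Let N and M be model categories, n a natural number, and F : Nⁿ ⥤ M a functor that is cofibrant in the following sense: for all cofibrations g_i : Y_i → Z_i between cofibrant objects of N (i = 1,…,n) and every subset S ⊆ {1,…,n} such that g_i is a trivial cofibration for every i ∈ S, the induced cube F(g₁,…,gₙ) : 2ⁿ ⥤ M has all of its latching maps cofibrations in M, and its latching map at every x ∈ 2ⁿ with x_i = true for some i ∈ S is a trivial cofibration in M. Then for any weak equivalences f_i : Y_i → Z_i between cofibrant objects of N (i = 1,…,n), the induced morphism F(Y₁,…,Yₙ) → F(Z₁,…,Zₙ) is a weak equivalence between cofibrant objects of M. -/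
/-!
Ken Brown's factorization writes each `f i` as `u i ≫ p i` with `v i ≫ p i = 𝟙`, where `u i` and
`v i` are trivial cofibrations between cofibrant objects; by two-out-of-three it suffices that `F`
sends families of trivial cofibrations to weak equivalences. For such a family `u`, walk from the
bottom to the top of its cube, switching on one coordinate `k` at a time. Each step is `F` applied
to a family that is a trivial cofibration at `k` and an identity elsewhere. In the cube of that
family the only vertex strictly below the basis vertex `eₖ` is `⊥`, so the edge `⊥ ⟶ eₖ` is a
retract of the latching map at `eₖ`, a trivial cofibration, and the edge `eₖ ⟶ ⊤` is an
isomorphism. Cofibrancy of `F.obj Y` comes from the bottom latching map of the identity cube on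
`Y`, whose latching object is initial.
-/

open CategoryTheory CategoryTheory.Limits

universe v u

variable {M : Type u} [Category.{v} M]

attribute [local instance 2000] Preorder.smallCategory

section Cube

variable {N : Type u} [Category.{v} N] {ι : Type}
variable {Y Z : ι → N} (g : ∀ i, Y i ⟶ Z i)

/-- The edge of the cube in direction `i` between `a ≤ b` in `Bool`. -/
def cubeEdge {i : ι} : ∀ (a b : Bool), a ≤ b → ((cond a (Z i) (Y i)) ⟶ (cond b (Z i) (Y i)))
  | false, false, _ => 𝟙 _
  | false, true, _ => g i
  | true, true, _ => 𝟙 _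
  | true, false, h => absurd h (by decide)

lemma cubeEdge_self {i : ι} (a : Bool) (h : a ≤ a) :
    cubeEdge (i := i) g a a h = 𝟙 (cond a (Z i) (Y i)) := by
  cases a <;> rfl

lemma cubeEdge_comp {i : ι} (a b c : Bool) (hab : a ≤ b) (hbc : b ≤ c) (hac : a ≤ c) :
    cubeEdge (i := i) g a c hac = cubeEdge g a b hab ≫ cubeEdge g b c hbc := by
  cases a <;> cases b <;> cases c <;>
    first
      | exact absurd hab (by decide)
      | exact absurd hbc (by decide)
      | simp [cubeEdge]

/-- The cube `2^ι ⥤ Nⁱ` induced by the family of morphisms `g i : Y i ⟶ Z i`: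
the vertex `x` is sent to the tuple whose `i`-th entry is `Y i` if `x i = false`
and `Z i` if `x i = true`. -/
noncomputable def cube : (ι → Bool) ⥤ (ι → N) where
  obj x := fun i => cond (x i) (Z i) (Y i)
  map {x y} h := fun i => cubeEdge g (x i) (y i) (leOfHom h i)
  map_id x := by
    funext i
    exact cubeEdge_self g (x i) le_rfl
  map_comp {x y z} h h' := by
    funext i
    exact cubeEdge_comp g (x i) (y i) (z i) (leOfHom h i) (leOfHom h' i) _

end Cube

section CofibrantFunctor

variable {N : Type u} [Category.{v} N] [HasColimitsOfSize.{0, 0} M]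

/-- A functor `F : Nⁱ ⥤ M` is cofibrant if for every family of cofibrations
`g i : Y i ⟶ Z i` between cofibrant objects of `N` and every subset `S` of the
index set such that `g i` is a trivial cofibration for all `i ∈ S`, all latching
maps of the induced cube `cube g ⋙ F : 2^ι ⥤ M` are cofibrations in `M`, and are
trivial cofibrations at every vertex `x` with `x i = true` for some `i ∈ S`. -/
def IsCofibrantFunctor [HasInitial N] (mN : ModelStructure N) (mM : ModelStructure M)
    {ι : Type} (F : (ι → N) ⥤ M) : Prop :=
  ∀ (Y Z : ι → N) (g : ∀ i, Y i ⟶ Z i),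
    (∀ i, mN.Cofibrant (Y i)) → (∀ i, mN.Cof (g i)) →
    ∀ S : Set ι, (∀ i ∈ S, mN.W (g i)) →
      (∀ x : ι → Bool, mM.Cof (latchingMap (cube g ⋙ F) x)) ∧
      (∀ x : ι → Bool, (∃ i ∈ S, x i = true) →
        mM.Cof (latchingMap (cube g ⋙ F) x) ∧ mM.W (latchingMap (cube g ⋙ F) x))

end CofibrantFunctor


lemma IsRetract.of_retractArrow {C : Type u} [Category.{v} C] {X Y X' Y' : C}
    {f : X ⟶ Y} {g : X' ⟶ Y'} (h : RetractArrow f g) : IsRetract f g :=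
  ⟨h.i.left, h.r.left, h.i.right, h.r.right, h.left.retract, h.right.retract, h.i.w, h.r.w.symm⟩

namespace ModelStructure

open MorphismProperty

variable {C : Type u} [Category.{v} C] (m : ModelStructure C)

instance : m.Cof.IsStableUnderRetracts :=
  ⟨fun h hg => m.cof_retract _ _ (.of_retractArrow h) hg⟩

instance : HasFactorization m.Cof (m.Fib ⊓ m.W) where
  nonempty_mapFactorizationData f := by
    obtain ⟨Z, i, p, hi, hpFib, hpW, fac⟩ := m.factor_cof_trivFib f
    exact ⟨{ Z, i, p, fac, hi, hp := ⟨hpFib, hpW⟩ }⟩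

lemma cof_eq_llp : m.Cof = (m.Fib ⊓ m.W).llp :=
  (llp_eq_of_le_llp_of_hasFactorization_of_isStableUnderRetracts
    fun _ _ i hi _ _ p hp => m.lift_cof_trivFib i p hi hp.1 hp.2).symm

instance : m.Cof.IsMultiplicative := by
  rw [cof_eq_llp]
  infer_instance

instance : m.Cof.IsStableUnderCobaseChange := by
  rw [cof_eq_llp]
  infer_instance

lemma w_id (X : C) : m.W (𝟙 X) := by
  obtain ⟨_, g, _, -, hg, -, -⟩ := m.factor_trivCof_fib (𝟙 X)
  exact m.w_cancel_right (𝟙 X) g hg (by rwa [Category.id_comp])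

instance : m.W.ContainsIdentities := ⟨m.w_id⟩

lemma w_of_isIso {X Y : C} (f : X ⟶ Y) [IsIso f] : m.W f :=
  m.w_retract f (𝟙 X) ⟨𝟙 X, 𝟙 X, inv f, f, by simp, by simp, by simp, by simp⟩ (m.w_id X)

variable [HasInitial C]

lemma cofibrant_of_cof {X Y : C} {f : X ⟶ Y} (hX : m.Cofibrant X) (hf : m.Cof f) :
    m.Cofibrant Y := by
  rw [Cofibrant, initial.hom_ext (initial.to Y) (initial.to X ≫ f)]
  exact comp_mem _ _ _ hX hf

variable [HasBinaryCoproducts C]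

lemma cof_coprod_inl {X Y : C} (hY : m.Cofibrant Y) : m.Cof (coprod.inl : X ⟶ X ⨿ Y) :=
  m.Cof.of_isPushout (IsPushout.of_hasBinaryCoproduct' X Y) hY

lemma cof_coprod_inr {X Y : C} (hX : m.Cofibrant X) : m.Cof (coprod.inr : Y ⟶ X ⨿ Y) :=
  m.Cof.of_isPushout (IsPushout.of_hasBinaryCoproduct' X Y).flip hX

/-- Factor `coprod.desc f (𝟙 Y) : X ⨿ Y ⟶ Y` as a cofibration followed by a trivial
fibration `p`. -/
lemma kenBrown_factorization {X Y : C} (f : X ⟶ Y) (hf : m.W f)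
    (hX : m.Cofibrant X) (hY : m.Cofibrant Y) :
    ∃ (Q : C) (u : X ⟶ Q) (v : Y ⟶ Q) (p : Q ⟶ Y),
      m.Cof u ∧ m.W u ∧ m.Cof v ∧ m.W v ∧ u ≫ p = f ∧ v ≫ p = 𝟙 Y := by
  obtain ⟨Q, q, p, hq, -, hp, hqp⟩ := m.factor_cof_trivFib (coprod.desc f (𝟙 Y))
  have hup : (coprod.inl ≫ q) ≫ p = f := by rw [Category.assoc, hqp, coprod.inl_desc]
  have hvp : (coprod.inr ≫ q) ≫ p = 𝟙 Y := by rw [Category.assoc, hqp, coprod.inr_desc]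
  refine ⟨Q, coprod.inl ≫ q, coprod.inr ≫ q, p, comp_mem _ _ _ (m.cof_coprod_inl hY) hq,
    m.w_cancel_right _ _ hp (hup ▸ hf), comp_mem _ _ _ (m.cof_coprod_inr hX) hq,
    m.w_cancel_right _ _ hp (hvp ▸ m.w_id Y), hup, hvp⟩

end ModelStructure

section LatchingRetracts

variable {P : Type} [Preorder P] [HasColimitsOfSize.{0, 0} M]

lemma isRetract_initial_to_latchingMap (D : P ⥤ M) {x : P} (hx : IsMin x) :
    IsRetract (initial.to (D.obj x)) (latchingMap D x) := by
  have hempty (y : ObjectProperty.FullSubcategory fun y : P => y < x) : False :=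
    hx.not_lt y.property
  refine ⟨initial.to _, colimit.desc _ ⟨⊥_ M, fun y => (hempty y).elim, fun y => (hempty y).elim⟩,
    𝟙 _, 𝟙 _, initial.hom_ext _ _, by simp, initial.hom_ext _ _, ?_⟩
  exact colimit.hom_ext fun y => (hempty y).elim

lemma isRetract_map_latchingMap (D : P ⥤ M) {b x : P} (hbx : b < x)
    (hb : ∀ y < x, y ≤ b) :
    IsRetract (D.map (homOfLE hbx.le)) (latchingMap D x) := by
  refine ⟨colimit.ι (ObjectProperty.ι (fun y : P => y < x) ⋙ D) ⟨b, hbx⟩,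
    colimit.desc (ObjectProperty.ι (fun y : P => y < x) ⋙ D) ⟨D.obj b,
      { app := fun y => D.map (homOfLE (hb y.obj y.property))
        naturality := fun _ _ _ => by
          dsimp
          rw [Category.comp_id, ← D.map_comp]
          rfl }⟩,
    𝟙 _, 𝟙 _, ?_, by simp, ?_, ?_⟩
  · erw [colimit.ι_desc]
    exact D.map_id b
  · erw [Category.comp_id, latchingMap, colimit.ι_desc]
  · refine colimit.hom_ext fun y => ?_
    erw [Category.comp_id, latchingMap, colimit.ι_desc, colimit.ι_desc_assoc]
    dsimp
    rw [← D.map_comp]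
    rfl

end LatchingRetracts

section Cube

variable {N : Type u} [Category.{v} N] {ι : Type} {Y Z : ι → N} (g : ∀ i, Y i ⟶ Z i)

lemma cubeEdge_mem (Q : MorphismProperty N) [Q.ContainsIdentities] {i : ι} (hg : Q (g i)) :
    ∀ (a b : Bool) (h : a ≤ b), Q (cubeEdge (i := i) g a b h)
  | false, false, _ => Q.id_mem _
  | false, true, _ => hg
  | true, true, _ => Q.id_mem _

lemma isIso_cubeEdge_of_eq {i : ι} (a b : Bool) (hab : a = b) (h : a ≤ b) :
    IsIso (cubeEdge (i := i) g a b h) := by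
  subst hab
  rw [cubeEdge_self]
  infer_instance

lemma isIso_cubeEdge {i : ι} [IsIso (g i)] (a b : Bool) (h : a ≤ b) :
    IsIso (cubeEdge (i := i) g a b h) :=
  cubeEdge_mem g (MorphismProperty.isomorphisms N) (inferInstanceAs (IsIso (g i))) a b h

end Cube

section CofibrantFunctorProperties

variable {N : Type u} [Category.{v} N] [HasColimitsOfSize.{0, 0} M] [HasInitial N]
  {mN : ModelStructure N} {mM : ModelStructure M} {ι : Type} {F : (ι → N) ⥤ M}

namespace IsCofibrantFunctor

lemma cofibrant_obj (hF : IsCofibrantFunctor mN mM F) {Y : ι → N}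
    (hY : ∀ i, mN.Cofibrant (Y i)) : mM.Cofibrant (F.obj Y) :=
  mM.cof_retract _ _ (isRetract_initial_to_latchingMap (cube (fun i => 𝟙 (Y i)) ⋙ F) isMin_bot)
    ((hF Y Y _ hY (fun i => mN.Cof.id_mem _) ∅ (by simp)).1 ⊥)

lemma w_map_of_isIso_of_ne (hF : IsCofibrantFunctor mN mM F) {Y Z : ι → N} (g : Y ⟶ Z)
    (hY : ∀ i, mN.Cofibrant (Y i)) (hg : ∀ i, mN.Cof (g i)) (k : ι) (hk : mN.W (g k))
    (hiso : ∀ i ≠ k, IsIso (g i)) : mM.W (F.map g) := by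
  classical
  let x : ι → Bool := fun j => decide (j = k)
  have hbx : ⊥ < x := lt_of_le_of_ne bot_le fun h => by simpa [x] using congrFun h k
  have hb : ∀ y < x, y ≤ ⊥ := by
    intro y hy j
    cases hyj : y j
    · exact Bool.false_le _
    · obtain rfl : j = k := by simpa [x] using Bool.le_iff_imp.1 (hy.le j) hyj
      refine absurd (fun j' => Bool.le_iff_imp.2 fun hj' => ?_) hy.not_ge
      obtain rfl : j' = j := by simpa [x] using hj'
      exact hyj
  obtain ⟨-, hlatch⟩ := (hF Y Z g hY hg {k} (by simpa using hk)).2 x ⟨k, rfl, by simp [x]⟩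
  have hbottom : mM.W ((cube g ⋙ F).map (homOfLE hbx.le)) :=
    mM.w_retract _ _ (isRetract_map_latchingMap _ hbx hb) hlatch
  have htop : IsIso ((cube g).map (homOfLE (le_top : x ≤ ⊤))) := by
    refine (isIso_pi_iff _).2 fun j => ?_
    by_cases hj : j = k
    · exact isIso_cubeEdge_of_eq g _ _ (by simp [x, hj]) _
    · have := hiso j hj
      exact isIso_cubeEdge g _ _ _
  have hfac : F.map g =
      F.map ((cube g).map (homOfLE hbx.le)) ≫ F.map ((cube g).map (homOfLE le_top)) := by
    rw [← F.map_comp, ← (cube g).map_comp]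
    rfl
  rw [hfac]
  exact mM.w_comp _ _ hbottom (mM.w_of_isIso (F.map ((cube g).map (homOfLE le_top))))

lemma w_map_cube_map (hF : IsCofibrantFunctor mN mM F) {Y C : ι → N} (u : Y ⟶ C)
    (hY : ∀ i, mN.Cofibrant (Y i)) (hu : ∀ i, mN.Cof (u i)) (hw : ∀ i, mN.W (u i))
    {x x' : ι → Bool} (h : x ≤ x') (k : ι) (hxx' : ∀ j ≠ k, x j = x' j) :
    mM.W (F.map ((cube u).map (homOfLE h))) := by
  refine hF.w_map_of_isIso_of_ne _ (fun j => ?_) (fun j => cubeEdge_mem u mN.Cof (hu j) _ _ _)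
    k (cubeEdge_mem u mN.W (hw k) _ _ _) (fun j hj => isIso_cubeEdge_of_eq u _ _ (hxx' j hj) _)
  show mN.Cofibrant (cond (x j) (C j) (Y j))
  cases x j
  exacts [hY j, mN.cofibrant_of_cof (hY j) (hu j)]

lemma w_map_of_trivCof [Finite ι] (hF : IsCofibrantFunctor mN mM F) {Y C : ι → N}
    (u : Y ⟶ C) (hY : ∀ i, mN.Cofibrant (Y i)) (hu : ∀ i, mN.Cof (u i))
    (hw : ∀ i, mN.W (u i)) : mM.W (F.map u) := by
  classical
  cases nonempty_fintype ι
  suffices ∀ (s : Finset ι) (x : ι → Bool), (∀ j, x j = true → j ∈ s) →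
      mM.W (F.map ((cube u).map (homOfLE (bot_le : ⊥ ≤ x)))) from
    this Finset.univ ⊤ fun j _ => Finset.mem_univ j
  intro s
  induction s using Finset.induction_on with
  | empty =>
    intro x hx
    obtain rfl : x = ⊥ := funext fun j => by simpa using hx j
    rw [show homOfLE (bot_le : (⊥ : ι → Bool) ≤ ⊥) = 𝟙 _ from rfl, (cube u).map_id, F.map_id]
    exact mM.w_id _
  | insert k s hk ih =>
    intro x hx
    let x₀ := Function.update x k false
    have hx₀ : x₀ ≤ x := fun j => by
      by_cases hj : j = k
      · subst hj; simp [x₀]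
      · simp [x₀, hj]
    rw [show homOfLE (bot_le : ⊥ ≤ x) = homOfLE (bot_le : ⊥ ≤ x₀) ≫ homOfLE hx₀ from rfl,
      (cube u).map_comp, F.map_comp]
    refine mM.w_comp _ _ (ih x₀ fun j hj => ?_)
      (hF.w_map_cube_map u hY hu hw hx₀ k fun j hj => Function.update_of_ne hj _ _)
    by_cases hjk : j = k
    · simp [x₀, hjk] at hj
    · simpa [hjk] using hx j (by simpa [x₀, hjk] using hj)

end IsCofibrantFunctor

end CofibrantFunctorProperties

theorem statement6_general {N : Type u} [Category.{v} N]
    [HasColimits N] [HasColimits M]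
    (mN : ModelStructure N) (mM : ModelStructure M)
    (n : ℕ) (F : (Fin n → N) ⥤ M)
    (hF : IsCofibrantFunctor mN mM F)
    (Y Z : Fin n → N) (f : ∀ i, Y i ⟶ Z i)
    (hYcof : ∀ i, mN.Cofibrant (Y i)) (hZcof : ∀ i, mN.Cofibrant (Z i))
    (hf : ∀ i, mN.W (f i)) :
    mM.W (F.map (f : Y ⟶ Z)) ∧ mM.Cofibrant (F.obj Y) ∧ mM.Cofibrant (F.obj Z) := by
  choose Q u v p hu hwu hv hwv hup hvp using
    fun i => mN.kenBrown_factorization (f i) (hf i) (hYcof i) (hZcof i)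
  have hFu : mM.W (F.map (u : Y ⟶ Q)) := hF.w_map_of_trivCof u hYcof hu hwu
  have hFv : mM.W (F.map (v : Z ⟶ Q)) := hF.w_map_of_trivCof v hZcof hv hwv
  have hFp : mM.W (F.map (p : Q ⟶ Z)) := by
    refine mM.w_cancel_left _ _ hFv ?_
    rw [← F.map_comp, show (v : Z ⟶ Q) ≫ (p : Q ⟶ Z) = 𝟙 Z from funext hvp, F.map_id]
    exact mM.w_id _
  refine ⟨?_, hF.cofibrant_obj hYcof, hF.cofibrant_obj hZcof⟩
  have hFf : F.map (f : Y ⟶ Z) = F.map (u : Y ⟶ Q) ≫ F.map (p : Q ⟶ Z) := by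
    rw [← F.map_comp]
    congr 1
    funext i
    exact (hup i).symm
  exact hFf ▸ mM.w_comp _ _ hFu hFp

/-- A cofibrant functor `F : Nⁿ ⥤ M` takes tuples of weak
equivalences between cofibrant objects to weak equivalences between cofibrant
objects. -/
theorem statement6 {N : Type u} [Category.{v} N]
    [HasLimits N] [HasColimits N] [HasLimits M] [HasColimits M]
    (mN : ModelStructure N) (mM : ModelStructure M)
    (n : ℕ) (F : (Fin n → N) ⥤ M)
    (hF : IsCofibrantFunctor mN mM F)
    (Y Z : Fin n → N) (f : ∀ i, Y i ⟶ Z i)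
    (hYcof : ∀ i, mN.Cofibrant (Y i)) (hZcof : ∀ i, mN.Cofibrant (Z i))
    (hf : ∀ i, mN.W (f i)) :
    mM.W (F.map (f : Y ⟶ Z)) ∧ mM.Cofibrant (F.obj Y) ∧ mM.Cofibrant (F.obj Z) :=
  statement6_general mN mM n F hF Y Z f hYcof hZcof hf
end

section
/- Let A be the non-unital commutative ring whose underlying abelian group is ℤ × ℤ with multiplication (a,b) · (c,d) := (0, 2ac), and let A² be the additive subgroup of A generated by all products u·v with u, v ∈ A. Then A² = {0} × 2ℤ, the quotient abelian group A/A² is isomorphic to ℤ × (ℤ/2ℤ), and in particular A/A² is not a free abelian group (equivalently, not a free ℤ-module). -/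
/-- The multiplication `(a,b) · (c,d) = (0, 2ac)` on the abelian group `ℤ × ℤ`. -/
def amul (x y : ℤ × ℤ) : ℤ × ℤ := (0, 2 * x.1 * y.1)

/-- `A²`: the additive subgroup of `A = ℤ × ℤ` generated by all products `u · v`. -/
def Asq : AddSubgroup (ℤ × ℤ) :=
  AddSubgroup.closure {a : ℤ × ℤ | ∃ u v : ℤ × ℤ, a = amul u v}

/-! Every product `(0, 2ac)` lies in `{0} × 2ℤ`, and `x · x = (0, 2)` generates that subgroup,
so `A/A² ≅ ℤ/{0} × ℤ/2ℤ`; the element of order two of the second factor rules out a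
basis. -/

theorem Asq_eq_prod : Asq = (⊥ : AddSubgroup ℤ).prod (AddSubgroup.zmultiples 2) := by
  apply le_antisymm
  · rw [Asq, AddSubgroup.closure_le]
    rintro _ ⟨u, v, rfl⟩
    exact AddSubgroup.mem_prod.2 ⟨AddSubgroup.mem_bot.2 rfl, u.1 * v.1, by simp [amul]; ring⟩
  · rintro ⟨a, b⟩ hab
    obtain ⟨ha, k, rfl⟩ := AddSubgroup.mem_prod.1 hab
    obtain rfl : a = 0 := AddSubgroup.mem_bot.1 ha
    have hx : amul (1, 0) (1, 0) ∈ Asq := AddSubgroup.subset_closure ⟨_, _, rfl⟩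
    have hgen : ((0, k • 2) : ℤ × ℤ) = k • amul (1, 0) (1, 0) := by simp [amul]
    exact hgen ▸ AddSubgroup.zsmul_mem _ hx k

noncomputable def quotientAsqEquiv : (ℤ × ℤ) ⧸ Asq ≃+ ℤ × ZMod 2 :=
  (QuotientAddGroup.quotientAddEquivOfEq Asq_eq_prod).trans <|
    (QuotientAddGroup.prodAddEquiv _ _).trans <|
      QuotientAddGroup.quotientBot.prodCongr (Int.quotientZMultiplesNatEquivZMod 2)

theorem not_free_int_prod_zmod (M : Type*) [AddCommGroup M] {n : ℕ} (hn : 1 < n) :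
    ¬ Module.Free ℤ (M × ZMod n) := by
  intro _
  have : Fact (1 < n) := ⟨hn⟩
  have htorsion : (n : ℤ) • ((0, 1) : M × ZMod n) = 0 := by simp
  rcases smul_eq_zero.1 htorsion with h | h
  · omega
  · exact one_ne_zero (congrArg Prod.snd h)

/-- For the non-unital commutative ring `A = ℤ × ℤ` with
`(a,b)·(c,d) = (0,2ac)`, the subgroup `A²` equals `{0} × 2ℤ`, the quotient `A/A²`
is isomorphic to `ℤ × ℤ/2ℤ`, and in particular `A/A²` is not free as a `ℤ`-module. -/
theorem statement10 :
    Asq = AddSubgroup.prod ⊥ (AddSubgroup.zmultiples (2 : ℤ)) ∧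
    Nonempty ((ℤ × ℤ) ⧸ Asq ≃+ ℤ × ZMod 2) ∧
    ¬ Module.Free ℤ ((ℤ × ℤ) ⧸ Asq) :=
  ⟨Asq_eq_prod, ⟨quotientAsqEquiv⟩, fun _ ↦ not_free_int_prod_zmod ℤ one_lt_two
    (Module.Free.of_equiv quotientAsqEquiv.toIntLinearEquiv)⟩
end
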